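/- The set K(c₀) of continuous vector fields f : c₀ → c₀ for which the autonomous ODE u' = f(u) has no local solution is spaceable in C(c₀): K(c₀) ∪ {0} contains a closed subspace of C(c₀) of dimension continuum. -/

import Mathlib

/-!
Identify `ℕ` with `ℕ × ℕ` through `Nat.pair` and send `c ∈ c₀` to the field `F_c = sqrtField c`,
`F_c(x)_⟨k,j⟩ = c_k (√|x_⟨k,j⟩| + 1/(j+1))`, which vanishes at infinity because `c_k → 0` and
`1/(j+1) → 0`. The map `c ↦ F_c` is linear with the continuous left inverse
`F ↦ (F(0)_⟨k,0⟩)_k`, so its range is closed and has dimension `dim c₀ = 𝔠`. If `c_k > 0` and `u`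
solves `u' = F_c(u)`, every coordinate `v = u_⟨k,j⟩` satisfies `v' ≥ c_k √|v| > 0`, hence
`√|v(s)| + √|v(t)| ≥ c_k (t - s) / 2`: for fixed `s < t` the vectors `u(s), u(t) ∈ c₀` would have
infinitely many coordinates bounded away from `0`.
-/

open Filter Topology Set ZeroAtInfty Nat
open scoped UniformConvergence

noncomputable section

namespace ZeroAtInftyContinuousMap

variable {α β : Type*} [TopologicalSpace α]

section Normed

variable [NormedAddCommGroup β]

theorem norm_apply_le (f : C₀(α, β)) (x : α) : ‖f x‖ ≤ ‖f‖ :=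
  norm_toBCF_eq_norm (f := f) ▸ f.toBCF.norm_coe_le_norm x

theorem dist_apply_le (f g : C₀(α, β)) (x : α) : dist (f x) (g x) ≤ dist f g :=
  dist_toBCF_eq_dist (f := f) ▸
    BoundedContinuousFunction.dist_coe_le_dist (f := f.toBCF) (g := g.toBCF) x

theorem norm_le_iff {f : C₀(α, β)} {C : ℝ} (hC : 0 ≤ C) : ‖f‖ ≤ C ↔ ∀ x, ‖f x‖ ≤ C :=
  norm_toBCF_eq_norm (f := f) ▸ BoundedContinuousFunction.norm_le hC

theorem dist_le_iff {f g : C₀(α, β)} {C : ℝ} (hC : 0 ≤ C) :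
    dist f g ≤ C ↔ ∀ x, dist (f x) (g x) ≤ C :=
  dist_toBCF_eq_dist (f := f) ▸ BoundedContinuousFunction.dist_le hC

def evalCLM (𝕜 : Type*) [NormedField 𝕜] [NormedSpace 𝕜 β] (x : α) : C₀(α, β) →L[𝕜] β :=
  LinearMap.mkContinuous
    { toFun := fun f => f x
      map_add' := fun _ _ => rfl
      map_smul' := fun _ _ => rfl } 1 fun f => by simpa using f.norm_apply_le x

@[simp]
theorem evalCLM_apply (𝕜 : Type*) [NormedField 𝕜] [NormedSpace 𝕜 β] (x : α) (f : C₀(α, β)) :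
    evalCLM 𝕜 x f = f x := rfl

end Normed

variable [DiscreteTopology α]

theorem tendsto_cofinite [Zero β] [TopologicalSpace β] (f : C₀(α, β)) :
    Tendsto f cofinite (𝓝 0) :=
  cocompact_eq_cofinite α ▸ f.zero_at_infty'

def ofTendstoCofinite [Zero β] [TopologicalSpace β] (f : α → β) (hf : Tendsto f cofinite (𝓝 0)) :
    C₀(α, β) where
  toFun := f
  continuous_toFun := continuous_of_discreteTopology
  zero_at_infty' := cocompact_eq_cofinite α ▸ hf

@[simp]
theorem ofTendstoCofinite_apply [Zero β] [TopologicalSpace β] (f : α → β) (hf) (x : α) :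
    ofTendstoCofinite f hf x = f x := rfl

theorem finite_setOf_le_norm [NormedAddCommGroup β] (f : C₀(α, β)) {ε : ℝ} (hε : 0 < ε) :
    {x | ε ≤ ‖f x‖}.Finite := by
  simpa using eventually_cofinite.1 (f.tendsto_cofinite.eventually (Metric.ball_mem_nhds 0 hε))

end ZeroAtInftyContinuousMap

open ZeroAtInftyContinuousMap

theorem Filter.Tendsto.mul_coprod {α β : Type*} {la : Filter α} {lb : Filter β} {f : α → ℝ}
    {g : β → ℝ} {C D : ℝ} (hf : Tendsto f la (𝓝 0)) (hg : Tendsto g lb (𝓝 0))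
    (hfC : ∀ a, |f a| ≤ C) (hgD : ∀ b, |g b| ≤ D) :
    Tendsto (fun p : α × β => f p.1 * g p.2) (la.coprod lb) (𝓝 0) :=
  tendsto_sup.2 ⟨(hf.comp tendsto_comap).zero_mul_isBoundedUnder_le
      (isBoundedUnder_of ⟨D, fun p => hgD p.2⟩),
    isBoundedUnder_le_mul_tendsto_zero (isBoundedUnder_of ⟨C, fun p => hfC p.1⟩)
      (hg.comp tendsto_comap)⟩

theorem Real.sqrt_abs_le_add (a b : ℝ) : √|a| ≤ √|b| + √|a - b| := by
  calc √|a| ≤ √(|b| + |a - b|) := Real.sqrt_le_sqrt (by linarith [abs_sub_abs_le_abs_sub a b])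
    _ ≤ √|b| + √|a - b| := Real.sqrt_le_iff.2 ⟨by positivity, by
        nlinarith [Real.sq_sqrt (abs_nonneg b), Real.sq_sqrt (abs_nonneg (a - b)),
          Real.sqrt_nonneg |b|, Real.sqrt_nonneg |a - b|]⟩

theorem Real.dist_sqrt_abs_le (a b : ℝ) : dist √|a| √|b| ≤ √(dist a b) := by
  rw [Real.dist_eq, Real.dist_eq]
  refine abs_sub_le_iff.2 ⟨sub_le_iff_le_add'.2 (Real.sqrt_abs_le_add a b), ?_⟩
  rw [abs_sub_comm a b]
  exact sub_le_iff_le_add'.2 (Real.sqrt_abs_le_add b a)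

section SqrtGrowth

variable {γ s t : ℝ} {v v' : ℝ → ℝ}

theorem sqrt_growth_of_nonneg (hst : s ≤ t) (hv : ∀ x ∈ Icc s t, HasDerivAt v (v' x) x)
    (hpos : ∀ x ∈ Icc s t, 0 < v' x) (hge : ∀ x ∈ Icc s t, γ * √|v x| ≤ v' x) (hs : 0 ≤ v s) :
    γ / 2 * (t - s) ≤ √|v t| := by
  have hcont : ContinuousOn v (Icc s t) := fun x hx => (hv x hx).continuousAt.continuousWithinAt
  have hmono : StrictMonoOn v (Icc s t) := by
    refine strictMonoOn_of_hasDerivWithinAt_pos (convex_Icc s t) hcont (fun x hx => ?_)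
      fun x hx => hpos x (interior_subset hx)
    exact (hv x (interior_subset hx)).hasDerivWithinAt
  have hv_pos : ∀ x ∈ Ioo s t, 0 < v x := fun x hx =>
    hs.trans_lt (hmono (left_mem_Icc.2 hst) (Ioo_subset_Icc_self hx) hx.1)
  have hw : MonotoneOn (fun x => √(v x) - γ / 2 * x) (Icc s t) := by
    rw [← interior_Icc] at hv_pos
    refine monotoneOn_of_hasDerivWithinAt_nonneg (f' := fun x => v' x / (2 * √(v x)) - γ / 2 * 1)
      (convex_Icc s t)
      ((hcont.sqrt).sub (continuousOn_const.mul continuousOn_id)) (fun x hx => ?_) fun x hx => ?_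
    · exact (((hv x (interior_subset hx)).sqrt (hv_pos x hx).ne').sub
        ((hasDerivAt_id x).const_mul _)).hasDerivWithinAt
    · have hsqrt := Real.sqrt_pos.2 (hv_pos x hx)
      have := hge x (interior_subset hx)
      rw [abs_of_pos (hv_pos x hx)] at this
      rw [mul_one, sub_nonneg, le_div_iff₀ (by positivity)]
      linarith
  have := hw (left_mem_Icc.2 hst) (right_mem_Icc.2 hst) hst
  have hvt : 0 ≤ v t := hs.trans (hmono.monotoneOn (left_mem_Icc.2 hst) (right_mem_Icc.2 hst) hst)
  rw [abs_of_nonneg hvt]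
  linarith [Real.sqrt_nonneg (v s)]

theorem sqrt_growth_of_nonpos (hst : s ≤ t) (hv : ∀ x ∈ Icc s t, HasDerivAt v (v' x) x)
    (hpos : ∀ x ∈ Icc s t, 0 < v' x) (hge : ∀ x ∈ Icc s t, γ * √|v x| ≤ v' x) (ht : v t ≤ 0) :
    γ / 2 * (t - s) ≤ √|v s| := by
  have hrefl : ∀ x ∈ Icc s t, s + t - x ∈ Icc s t := fun x hx =>
    ⟨by linarith [hx.2], by linarith [hx.1]⟩
  have := sqrt_growth_of_nonneg (v := fun x => -v (s + t - x)) (v' := fun x => v' (s + t - x))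
    hst (fun x hx => ?_) (fun x hx => hpos _ (hrefl x hx))
    (fun x hx => by simpa only [abs_neg] using hge _ (hrefl x hx)) (by simpa using ht)
  · simpa [abs_neg] using this
  · simpa [Function.comp_def] using
      ((hv _ (hrefl x hx)).comp x ((hasDerivAt_id x).const_sub (s + t))).fun_neg

theorem sqrt_abs_add_sqrt_abs_ge (hst : s ≤ t) (hv : ∀ x ∈ Icc s t, HasDerivAt v (v' x) x)
    (hpos : ∀ x ∈ Icc s t, 0 < v' x) (hge : ∀ x ∈ Icc s t, γ * √|v x| ≤ v' x) :
    γ / 2 * (t - s) ≤ √|v s| + √|v t| := by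
  rcases le_or_gt 0 (v s) with hs | hs
  · linarith [sqrt_growth_of_nonneg hst hv hpos hge hs, Real.sqrt_nonneg |v s|]
  rcases le_or_gt (v t) 0 with ht | ht
  · linarith [sqrt_growth_of_nonpos hst hv hpos hge ht, Real.sqrt_nonneg |v t|]
  obtain ⟨z, hz, hvz⟩ : ∃ z ∈ Icc s t, v z = 0 :=
    intermediate_value_Icc hst (fun x hx => (hv x hx).continuousAt.continuousWithinAt)
      ⟨hs.le, ht.le⟩
  have hleft : Icc s z ⊆ Icc s t := Icc_subset_Icc le_rfl hz.2
  have hright : Icc z t ⊆ Icc s t := Icc_subset_Icc hz.1 le_rfl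
  have := sqrt_growth_of_nonpos hz.1 (fun x hx => hv x (hleft hx)) (fun x hx => hpos x (hleft hx))
    (fun x hx => hge x (hleft hx)) hvz.le
  have := sqrt_growth_of_nonneg hz.2 (fun x hx => hv x (hright hx))
    (fun x hx => hpos x (hright hx)) (fun x hx => hge x (hright hx)) hvz.ge
  linarith

end SqrtGrowth

local notation "c₀" => ZeroAtInftyContinuousMap ℕ ℝ

def weight (j : ℕ) : ℝ := 1 / ((j : ℝ) + 1)

theorem weight_pos (j : ℕ) : 0 < weight j := by unfold weight; positivity

theorem weight_le_one (j : ℕ) : weight j ≤ 1 :=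
  div_le_one_of_le₀ (by simp) (by positivity)

theorem tendsto_sqrtField (c x : c₀) :
    Tendsto (fun n => c (unpair n).1 * (√|x n| + weight (unpair n).2)) cofinite (𝓝 0) := by
  simp_rw [mul_add]
  rw [← add_zero 0]
  refine Tendsto.add (isBoundedUnder_le_mul_tendsto_zero ?_ ?_) ?_
  · exact isBoundedUnder_of ⟨‖c‖, fun n => c.norm_apply_le _⟩
  · simpa [Function.comp_def] using ((continuous_abs.sqrt).tendsto 0).comp x.tendsto_cofinite
  · have hweight : Tendsto weight cofinite (𝓝 0) :=
      Nat.cofinite_eq_atTop ▸ tendsto_one_div_add_atTop_nhds_zero_nat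
    have := (c.tendsto_cofinite.mul_coprod hweight (fun k => c.norm_apply_le k) fun j => by
      rw [abs_of_pos (weight_pos j)]; exact weight_le_one j)
    rw [coprod_cofinite] at this
    exact this.comp pairEquiv.symm.injective.tendsto_cofinite

def sqrtField (c x : c₀) : c₀ := ofTendstoCofinite _ (tendsto_sqrtField c x)

@[simp]
theorem sqrtField_apply (c x : c₀) (n : ℕ) :
    sqrtField c x n = c (unpair n).1 * (√|x n| + weight (unpair n).2) := rfl

def sqrtFieldₗ : c₀ →ₗ[ℝ] c₀ → c₀ where
  toFun := sqrtField
  map_add' c c' := by ext x n; simp [add_mul]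
  map_smul' a c := by ext x n; simp [mul_assoc]

theorem sqrtField_neg_neg (c x : c₀) : sqrtField (-c) (-x) = -sqrtField c x := by
  ext n; simp [neg_mul]

theorem dist_sqrtField_le_mul_sqrt_dist (c x y : c₀) :
    dist (sqrtField c x) (sqrtField c y) ≤ ‖c‖ * √(dist x y) := by
  refine (dist_le_iff (by positivity)).2 fun n => ?_
  calc dist (sqrtField c x n) (sqrtField c y n) = ‖c (unpair n).1‖ * dist √|x n| √|y n| := by
        simp only [sqrtField_apply, Real.dist_eq, Real.norm_eq_abs, ← abs_mul]; ring_nf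
    _ ≤ ‖c‖ * √(dist x y) := by
        gcongr
        · exact c.norm_apply_le _
        · exact (Real.dist_sqrt_abs_le _ _).trans (Real.sqrt_le_sqrt (x.dist_apply_le y n))

theorem continuous_sqrtField (c : c₀) : Continuous (sqrtField c) := by
  refine continuous_iff_continuousAt.2 fun x => tendsto_iff_dist_tendsto_zero.2 ?_
  refine squeeze_zero (fun _ => dist_nonneg) (fun y => dist_sqrtField_le_mul_sqrt_dist c y x) ?_
  exact ((continuous_id.dist continuous_const).sqrt.const_mul ‖c‖).tendsto' x 0 (by simp)

theorem norm_sqrtField_le (c x : c₀) : ‖sqrtField c x‖ ≤ ‖c‖ * (√‖x‖ + 1) := by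
  refine (norm_le_iff (by positivity)).2 fun n => ?_
  rw [sqrtField_apply, norm_mul,
    Real.norm_of_nonneg (add_nonneg (Real.sqrt_nonneg _) (weight_pos _).le)]
  exact mul_le_mul (c.norm_apply_le _)
    (add_le_add (Real.sqrt_le_sqrt (x.norm_apply_le n)) (weight_le_one _))
    (add_nonneg (Real.sqrt_nonneg _) (weight_pos _).le) (norm_nonneg c)

theorem not_hasDerivAt_sqrtField_of_pos {c : c₀} {k : ℕ} (hk : 0 < c k) {a b : ℝ} (hab : a < b)
    (u : ℝ → c₀) : ¬ ∀ t ∈ Ioo a b, HasDerivAt u (sqrtField c (u t)) t := by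
  intro hu
  obtain ⟨s, has, hsb⟩ := exists_between hab
  obtain ⟨t, hst, htb⟩ := exists_between hsb
  have hgap : 0 < c k / 4 * (t - s) := mul_pos (by positivity) (sub_pos.2 hst)
  set β := (c k / 4 * (t - s)) ^ 2
  have hβ : 0 < β := pow_pos hgap 2
  have hlarge : ∀ j, β ≤ |u s (pair k j)| ∨ β ≤ |u t (pair k j)| := by
    intro j
    have hv : ∀ x ∈ Icc s t, HasDerivAt (fun x => u x (pair k j))
        (c k * (√|u x (pair k j)| + weight j)) x := fun x hx => by
      simpa [Function.comp_def] using (evalCLM ℝ (pair k j)).hasFDerivAt.comp_hasDerivAt x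
        (hu x (Icc_subset_Ioo has htb hx))
    have hgrowth := sqrt_abs_add_sqrt_abs_ge hst.le hv
      (fun x _ => mul_pos hk (by linarith [Real.sqrt_nonneg |u x (pair k j)|, weight_pos j]))
      fun x _ => mul_le_mul_of_nonneg_left (le_add_of_nonneg_right (weight_pos j).le) hk.le
    by_contra! hsmall
    linarith [(Real.sqrt_lt' hgap).2 hsmall.1, (Real.sqrt_lt' hgap).2 hsmall.2]
  refine (infinite_range_of_injective fun i j h => (pair_eq_pair.1 h).2 :
    (range (pair k)).Infinite) (((u s).finite_setOf_le_norm hβ).union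
      ((u t).finite_setOf_le_norm hβ) |>.subset ?_)
  rintro _ ⟨j, rfl⟩
  exact hlarge j

theorem not_hasDerivAt_sqrtField {c : c₀} (hc : c ≠ 0) {a b : ℝ} (hab : a < b) (u : ℝ → c₀) :
    ¬ ∀ t ∈ Ioo a b, HasDerivAt u (sqrtField c (u t)) t := by
  obtain ⟨k, hk⟩ : ∃ k, c k ≠ 0 := by
    by_contra! h
    exact hc (ext h)
  rcases hk.lt_or_gt with hneg | hpos
  · intro hu
    refine not_hasDerivAt_sqrtField_of_pos (c := -c) (k := k) (by simpa using hneg) hab (-u) ?_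
    intro t ht
    simpa [sqrtField_neg_neg] using (hu t ht).neg
  · exact not_hasDerivAt_sqrtField_of_pos hpos hab u

theorem rank_c₀ : Module.rank ℝ c₀ = Cardinal.continuum := by
  refine le_antisymm ?_ ?_
  · calc Module.rank ℝ c₀ ≤ Cardinal.mk c₀ := rank_le_card ℝ c₀
      _ ≤ Cardinal.mk (ℕ → ℝ) := Cardinal.mk_le_of_injective DFunLike.coe_injective
      _ = Cardinal.continuum := by simp [Cardinal.mk_real, Cardinal.continuum_power_aleph0]
  · let geom (r : Ioo (0 : ℝ) 1) : c₀ := ofTendstoCofinite (fun n => (r : ℝ) ^ n)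
      (Nat.cofinite_eq_atTop ▸ tendsto_pow_atTop_nhds_zero_of_lt_one r.2.1.le r.2.2)
    have hgeom : LinearIndependent ℝ geom :=
      LinearIndependent.of_comp (LinearMap.pi fun n => (evalCLM ℝ n).toLinearMap) <|
        (linearIndependent_monoidHom (Multiplicative ℕ) ℝ).comp
          (fun r : Ioo (0 : ℝ) 1 => powersHom ℝ (r : ℝ))
          ((powersHom ℝ).injective.comp Subtype.val_injective)
    simpa [Cardinal.mk_Ioo_real zero_lt_one] using hgeom.cardinal_le_rank

abbrev boundedSets : Set (Set c₀) := {B | Bornology.IsBounded B}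

local notation "𝔅" => boundedSets

theorem singleton_mem_boundedSets (x : c₀) : {x} ∈ 𝔅 :=
  Bornology.isBounded_singleton (x := x)

def diagCoeffs (x : c₀) : c₀ :=
  ofTendstoCofinite (fun k => x (pair k 0))
    (x.tendsto_cofinite.comp (show Function.Injective (pair · 0) from
      fun _ _ h => (pair_eq_pair.1 h).1).tendsto_cofinite)

theorem continuous_diagCoeffs : Continuous diagCoeffs :=
  LipschitzWith.continuous (K := 1) <| LipschitzWith.of_dist_le_mul fun x y => by
    simpa using (dist_le_iff dist_nonneg).2 fun k => x.dist_apply_le y (pair k 0)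

theorem diagCoeffs_sqrtField_zero (c : c₀) : diagCoeffs (sqrtField c 0) = c := by
  ext k
  simp [diagCoeffs, weight]

theorem sqrtField_injective : Function.Injective sqrtField :=
  Function.LeftInverse.injective (g := fun F : c₀ → c₀ => diagCoeffs (F 0))
    diagCoeffs_sqrtField_zero

theorem dist_sqrtField_sqrtField_le (c c' x : c₀) :
    dist (sqrtField c x) (sqrtField c' x) ≤ ‖c - c'‖ * (√‖x‖ + 1) := by
  have : sqrtField c x - sqrtField c' x = sqrtField (c - c') x := by ext n; simp [sub_mul]
  rw [dist_eq_norm, this]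
  exact norm_sqrtField_le _ _

theorem continuous_ofFun_sqrtField : Continuous fun c => UniformOnFun.ofFun 𝔅 (sqrtField c) := by
  refine continuous_iff_continuousAt.2 fun c =>
    UniformOnFun.tendsto_iff_tendstoUniformlyOn.2 fun B hB => ?_
  obtain ⟨R, hR⟩ := (show Bornology.IsBounded B from hB).subset_closedBall 0
  refine Metric.tendstoUniformlyOn_iff.2 fun ε hε => ?_
  have hC : 0 < √R + 1 := by positivity
  filter_upwards [Metric.ball_mem_nhds c (div_pos hε hC)] with c' hc' x hx
  have hxR : ‖x‖ ≤ R := mem_closedBall_zero_iff.1 (hR hx)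
  rw [Metric.mem_ball', dist_eq_norm, lt_div_iff₀ hC] at hc'
  show dist (sqrtField c x) (sqrtField c' x) < ε
  calc dist (sqrtField c x) (sqrtField c' x) ≤ ‖c - c'‖ * (√‖x‖ + 1) :=
        dist_sqrtField_sqrtField_le c c' x
    _ ≤ ‖c - c'‖ * (√R + 1) := by gcongr
    _ < ε := hc'

theorem isClosed_setOf_toFun_mem_range_sqrtField :
    IsClosed {h : c₀ →ᵤ[𝔅] c₀ | UniformOnFun.toFun 𝔅 h ∈ range sqrtField} := by
  have : T2Space (c₀ →ᵤ[𝔅] c₀) := UniformOnFun.t2Space_of_covering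
    (sUnion_eq_univ_iff.2 fun x => ⟨{x}, singleton_mem_boundedSets x, rfl⟩)
  have hinv : Function.LeftInverse (fun h => diagCoeffs (UniformOnFun.toFun 𝔅 h 0))
      fun c => UniformOnFun.ofFun 𝔅 (sqrtField c) := diagCoeffs_sqrtField_zero
  have hcont : Continuous fun h => diagCoeffs (UniformOnFun.toFun 𝔅 h 0) :=
    continuous_diagCoeffs.comp
      (UniformOnFun.uniformContinuous_eval_of_mem _ _ (mem_singleton 0)
        (singleton_mem_boundedSets 0)).continuous
  have := hinv.isClosed_range hcont continuous_ofFun_sqrtField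
  rwa [range_comp', Equiv.image_eq_preimage_symm] at this

end

/-- The set `K(c₀)` of continuous vector fields on `c₀` for which `u' = f(u)`
has no local solution is `𝔠`-spaceable in `C(c₀)` (the continuous vector
fields on `c₀` with the topology of uniform convergence on bounded sets):
`K(c₀) ∪ {0}` contains a closed subspace of dimension continuum. Closedness is
stated in the subspace of continuous fields of `c₀ →ᵤ[bounded sets] c₀`. -/
theorem stmt8 :
    ∃ S : Submodule ℝ (ZeroAtInftyContinuousMap ℕ ℝ → ZeroAtInftyContinuousMap ℕ ℝ),
      Module.rank ℝ S = Cardinal.continuum ∧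
      (∀ f ∈ S, Continuous f) ∧
      (∀ f ∈ S, f ≠ 0 →
        ¬ ∃ (a b : ℝ) (_ : a < b) (u : ℝ → ZeroAtInftyContinuousMap ℕ ℝ),
          ∀ t ∈ Set.Ioo a b, HasDerivAt u (f (u t)) t) ∧
      IsClosed {h : {h₀ : UniformOnFun (ZeroAtInftyContinuousMap ℕ ℝ)
            (ZeroAtInftyContinuousMap ℕ ℝ)
            {B : Set (ZeroAtInftyContinuousMap ℕ ℝ) | Bornology.IsBounded B} //
            Continuous (UniformOnFun.toFun _ h₀)} |
          UniformOnFun.toFun _ h.val ∈ S} := by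
  refine ⟨LinearMap.range sqrtFieldₗ, ?_, ?_, ?_, ?_⟩
  · rw [rank_range_of_injective _ sqrtField_injective, rank_c₀]
  · rintro _ ⟨c, rfl⟩
    exact continuous_sqrtField c
  · rintro _ ⟨c, rfl⟩ hc ⟨a, b, hab, u, hu⟩
    exact not_hasDerivAt_sqrtField (by rintro rfl; exact hc (map_zero _)) hab u hu
  · exact isClosed_setOf_toFun_mem_range_sqrtField.preimage continuous_subtype_val
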